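/- arXiv:1105.4443 — 3 statements merged into one kernel-verified Lean document; each statement's English description precedes it below -/
import Mathlib

section
/- Let G be a perfect group admitting a non-trivial homogeneous quasi-morphism q. Then the commutator length function cl : G → ℕ is unbounded; more precisely, for any g with q(g) ≠ 0, cl(gᵖ) → ∞ as p → ∞. -/
/-!
A homogeneous quasi-morphism is bounded by `3 D` on commutators, so by the quasi-morphism
inequality it is bounded by `4 D n` on products of `n` commutators; hence `|q g| ≤ 4 D cl(g)`.
Homogeneity makes `|q (g ^ p)| = p |q g|` grow linearly in `p`, so `cl (g ^ p) ≥ p |q g| / 4D`.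
-/

open Filter
open scoped commutatorElement

section Quasimorphism

variable {G : Type*} [Group G] {q : G → ℝ} {D : ℝ}

theorem map_one_of_map_zpow (hhom : ∀ (a : G) (n : ℤ), q (a ^ n) = n * q a) : q 1 = 0 := by
  simpa using hhom 1 0

theorem map_inv_of_map_zpow (hhom : ∀ (a : G) (n : ℤ), q (a ^ n) = n * q a) (a : G) :
    q a⁻¹ = -q a := by
  simpa using hhom a (-1)

theorem abs_map_commutatorElement_le (hq : ∀ a b : G, |q (a * b) - q a - q b| ≤ D)
    (hinv : ∀ a : G, q a⁻¹ = -q a) (a b : G) : |q ⁅a, b⁆| ≤ 3 * D := by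
  have h₁ := hq (a * b * a⁻¹) b⁻¹
  have h₂ := hq (a * b) a⁻¹
  have h₃ := hq a b
  rw [hinv] at h₁ h₂
  rw [commutatorElement_def]
  rw [abs_le] at h₁ h₂ h₃ ⊢
  constructor <;> linarith

theorem abs_map_list_prod_le (hq : ∀ a b : G, |q (a * b) - q a - q b| ≤ D) (h₁ : q 1 = 0)
    {B : ℝ} (l : List G) (hl : ∀ c ∈ l, |q c| ≤ B) : |q l.prod| ≤ l.length * (B + D) := by
  induction l with
  | nil => simp [h₁]
  | cons c l ih =>
    have hc := hl c List.mem_cons_self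
    have hrest := ih fun x hx => hl x (List.mem_cons_of_mem c hx)
    have hmul := hq c l.prod
    rw [List.prod_cons, List.length_cons, Nat.cast_succ]
    rw [abs_le] at hc hrest hmul ⊢
    constructor <;> linarith

theorem abs_map_le_of_eq_prod_commutators (hq : ∀ a b : G, |q (a * b) - q a - q b| ≤ D)
    (hhom : ∀ (a : G) (n : ℤ), q (a ^ n) = n * q a) {g : G} {n : ℕ} (a b : Fin n → G)
    (hg : g = (List.ofFn fun i => ⁅a i, b i⁆).prod) : |q g| ≤ 4 * D * n := by
  have hcomm : ∀ c ∈ List.ofFn (fun i => ⁅a i, b i⁆), |q c| ≤ 3 * D := by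
    simp only [List.mem_ofFn, forall_exists_index, forall_apply_eq_imp_iff]
    exact fun i => abs_map_commutatorElement_le hq (map_inv_of_map_zpow hhom) _ _
  have := abs_map_list_prod_le hq (map_one_of_map_zpow hhom) _ hcomm
  rw [List.length_ofFn] at this
  rw [hg]
  linarith

end Quasimorphism

theorem commutator_length_unbounded_of_nontrivial_quasimorphism_general
    {G : Type*} [Group G] (q : G → ℝ) (D : ℝ) (hD : 0 < D)
    (hq : ∀ a b : G, |q (a * b) - q a - q b| ≤ D)
    (hhom : ∀ (a : G) (n : ℤ), q (a ^ n) = (n : ℝ) * q a)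
    (hnontrivial : ∃ g : G, q g ≠ 0)
    (cl : G → ℕ)
    (hcl_exists : ∀ g : G, ∃ a b : Fin (cl g) → G,
      g = (List.ofFn (fun i => a i * b i * (a i)⁻¹ * (b i)⁻¹)).prod) :
    (¬ ∃ C : ℕ, ∀ g : G, cl g ≤ C) ∧
      ∀ g : G, q g ≠ 0 →
        Filter.Tendsto (fun p : ℕ => cl (g ^ p)) Filter.atTop Filter.atTop := by
  have hgrowth (g : G) (p : ℕ) : |q g| / (4 * D) * p ≤ cl (g ^ p) := by
    obtain ⟨a, b, hab⟩ := hcl_exists (g ^ p)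
    have hbound := abs_map_le_of_eq_prod_commutators hq hhom a b hab
    have hpow : q (g ^ p) = p * q g := by simpa using hhom g p
    rw [hpow, abs_mul, Nat.abs_cast] at hbound
    rw [div_mul_eq_mul_div, div_le_iff₀ (by positivity)]
    linarith
  have htendsto (g : G) (hg : q g ≠ 0) : Tendsto (fun p : ℕ => cl (g ^ p)) atTop atTop := by
    rw [← tendsto_natCast_atTop_iff (R := ℝ)]
    refine tendsto_atTop_mono (hgrowth g) (Tendsto.const_mul_atTop ?_ tendsto_natCast_atTop_atTop)
    have := abs_pos.mpr hg
    positivity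
  refine ⟨fun ⟨C, hC⟩ => ?_, htendsto⟩
  obtain ⟨g, hg⟩ := hnontrivial
  obtain ⟨p, hp⟩ := ((htendsto g hg).eventually (eventually_gt_atTop C)).exists
  exact (hC (g ^ p)).not_gt hp

theorem commutator_length_unbounded_of_nontrivial_quasimorphism
    {G : Type*} [Group G] (q : G → ℝ) (D : ℝ) (hD : 0 < D)
    (hq : ∀ a b : G, |q (a * b) - q a - q b| ≤ D)
    (hhom : ∀ (a : G) (n : ℤ), q (a ^ n) = (n : ℝ) * q a)
    (hnontrivial : ∃ g : G, q g ≠ 0)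
    (cl : G → ℕ)
    (hcl_exists : ∀ g : G, ∃ a b : Fin (cl g) → G,
      g = (List.ofFn (fun i => a i * b i * (a i)⁻¹ * (b i)⁻¹)).prod)
    (hcl_min : ∀ (g : G) (n : ℕ) (a b : Fin n → G),
      g = (List.ofFn (fun i => a i * b i * (a i)⁻¹ * (b i)⁻¹)).prod → cl g ≤ n) :
    (¬ ∃ C : ℕ, ∀ g : G, cl g ≤ C) ∧
      ∀ g : G, q g ≠ 0 →
        Filter.Tendsto (fun p : ℕ => cl (g ^ p)) Filter.atTop Filter.atTop :=
  commutator_length_unbounded_of_nontrivial_quasimorphism_general q D hD hq hhom hnontrivial cl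
    hcl_exists
end

section
/- Let F ∈ Homeo_ℤ(ℝ) and r₀ ∈ ℝ. Then for every natural number n ≥ 1, |Fⁿ(r₀) - n·F(r₀) + (n-1)·r₀| ≤ n - 1. -/
/-!
The displacement `x ↦ F x - x` of a degree-one lift is `1`-periodic and, by monotonicity,
varies by at most `1`. Writing `Fⁿ(r₀) - r₀ - n (F r₀ - r₀)` as the sum over `i < n` of the
differences between the displacements at `Fⁱ(r₀)` and at `r₀`, whose `i = 0` term vanishes,
bounds it by `n - 1`.
-/

def HomeoZ (F : ℝ → ℝ) : Prop :=
  Continuous F ∧ StrictMono F ∧ Function.Bijective F ∧ ∀ x : ℝ, F (x + 1) = F x + 1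

namespace CircleDeg1Lift

variable (f : CircleDeg1Lift)

theorem abs_displacement_add_sub_displacement_le (x : ℝ) {t : ℝ} (ht₀ : 0 ≤ t) (ht₁ : t ≤ 1) :
    |(f (x + t) - (x + t)) - (f x - x)| ≤ 1 := by
  have hlow : f x ≤ f (x + t) := f.mono (by linarith)
  have hupp : f (x + t) ≤ f x + 1 := f.map_add_one x ▸ f.mono (by linarith)
  rw [abs_le]
  constructor <;> linarith

theorem abs_displacement_sub_displacement_le (x y : ℝ) :
    |(f y - y) - (f x - x)| ≤ 1 := by
  set m := ⌊y - x⌋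
  have hm : y - m = x + (y - m - x) := by ring
  have hy : f y - y = f (y - m) - (y - m) := by rw [f.map_sub_int]; ring
  rw [hy, hm]
  exact f.abs_displacement_add_sub_displacement_le x (by linarith [Int.floor_le (y - x)])
    (by linarith [Int.lt_floor_add_one (y - x)])

theorem abs_iterate_sub_le (x : ℝ) {n : ℕ} (hn : 1 ≤ n) :
    |f^[n] x - n * f x + (n - 1) * x| ≤ n - 1 := by
  induction n, hn using Nat.le_induction with
  | base => simp
  | succ k _ ih =>
    have hstep : f^[k + 1] x - (k + 1 : ℕ) * f x + ((k + 1 : ℕ) - 1) * x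
        = ((f (f^[k] x) - f^[k] x) - (f x - x)) + (f^[k] x - k * f x + (k - 1) * x) := by
      rw [Function.iterate_succ_apply']; push_cast; ring
    calc |f^[k + 1] x - (k + 1 : ℕ) * f x + ((k + 1 : ℕ) - 1) * x|
        ≤ |(f (f^[k] x) - f^[k] x) - (f x - x)| + |f^[k] x - k * f x + (k - 1) * x| :=
          hstep ▸ abs_add_le _ _
      _ ≤ 1 + (k - 1) := add_le_add (f.abs_displacement_sub_displacement_le _ _) ih
      _ = (k + 1 : ℕ) - 1 := by push_cast; ring

end CircleDeg1Lift

def HomeoZ.toCircleDeg1Lift {F : ℝ → ℝ} (hF : HomeoZ F) : CircleDeg1Lift where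
  toFun := F
  monotone' := hF.2.1.monotone
  map_add_one' := hF.2.2.2

theorem iterate_estimate_for_circle_lifts
    (F : ℝ → ℝ) (hF : HomeoZ F) (r₀ : ℝ) (n : ℕ) (hn : 1 ≤ n) :
    |F^[n] r₀ - (n : ℝ) * F r₀ + ((n : ℝ) - 1) * r₀| ≤ (n : ℝ) - 1 :=
  hF.toCircleDeg1Lift.abs_iterate_sub_le r₀ hn
end

section
/- Let H be the closed upper half plane ℝ × [0,∞). Every compactly supported homeomorphism h of H that is isotopic to the identity is a single commutator in the group Homeo₀(H): there exist g, φ in Homeo₀(H) with h = g φ g⁻¹ φ⁻¹. -/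
/-- The closed upper half plane `ℝ × [0,∞)`. -/
abbrev HalfPlane : Type := {p : ℝ × ℝ // 0 ≤ p.2}

/-- A permutation of the half plane which is a homeomorphism. -/
def IsHomeo (h : Equiv.Perm HalfPlane) : Prop :=
  Continuous h ∧ Continuous h.symm

/-- `h` has compact support. -/
def CompactSupp (h : Equiv.Perm HalfPlane) : Prop :=
  ∃ K : Set HalfPlane, IsCompact K ∧ ∀ x ∉ K, h x = x

/-- `h` is isotopic to the identity through (compactly supported) homeomorphisms. -/
def IsotopicToId (h : Equiv.Perm HalfPlane) : Prop :=
  ∃ Φ : Set.Icc (0:ℝ) 1 → Equiv.Perm HalfPlane,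
    (∀ t, IsHomeo (Φ t) ∧ CompactSupp (Φ t)) ∧
    Continuous (fun p : Set.Icc (0:ℝ) 1 × HalfPlane => Φ p.1 p.2) ∧
    Φ ⟨0, by norm_num⟩ = 1 ∧ Φ ⟨1, by norm_num⟩ = h

/-- An element of `Homeo₀(ℍ)` (compactly supported homeomorphisms isotopic to
the identity). -/
def InHomeoZero (h : Equiv.Perm HalfPlane) : Prop :=
  IsHomeo h ∧ CompactSupp h ∧ IsotopicToId h

/-!
After conjugating by an affine homeomorphism we may assume that `h` is supported in the annulus
`3 ≤ ‖q‖ ≤ 4` (sup norm). Let `φ` be a compactly supported homeomorphism acting as the dilation by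
`1 / 2` on `‖q‖ ≤ 4`: the sets `φ ^ k (annulus)` are pairwise disjoint and shrink to the boundary
point `0`. The infinite product `g = ∏ₖ φ ^ k h φ ^ (-k)` of conjugates with disjoint supports
satisfies `g = h * (φ g φ⁻¹)`, i.e. `h = g φ g⁻¹ φ⁻¹`, and it is continuous at `0` because it
preserves each of the shrinking annuli. Both `g` and `φ` lie in `Homeo₀` by Alexander's trick: a
compactly supported homeomorphism `e` is isotopic to the identity through the conjugates of `e`
by the dilations by `t → 0`.
-/

open Equiv (Perm)

namespace Equiv.Perm

variable {α : Type*}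

/-- Equivalently, the images `φ ^ n '' U`, `n ∈ ℕ`, are pairwise disjoint. -/
def IsWandering (φ : Perm α) (U : Set α) : Prop :=
  ∀ n : ℕ, 0 < n → ∀ x ∈ U, (φ ^ n) x ∉ U

variable {φ e : Perm α} {U : Set α}

theorem IsWandering.eq_of_inv_pow_mem (hU : IsWandering φ U) {x : α} {j k : ℕ}
    (hj : (φ ^ j)⁻¹ x ∈ U) (hk : (φ ^ k)⁻¹ x ∈ U) : j = k := by
  have key : ∀ {j k : ℕ}, j < k → (φ ^ j)⁻¹ x ∈ U → (φ ^ k)⁻¹ x ∉ U := by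
    intro j k hjk hj hk
    obtain ⟨n, rfl⟩ := Nat.exists_eq_add_of_lt hjk
    refine hU (n + 1) n.succ_pos _ hk ?_
    rwa [← Perm.mul_apply, show φ ^ (n + 1) * (φ ^ (j + n + 1))⁻¹ = (φ ^ j)⁻¹ by group]
  rcases lt_trichotomy j k with h | h | h
  · exact absurd hk (key h hj)
  · exact h
  · exact absurd hj (key h hk)

theorem apply_mem_of_forall_notMem (he : ∀ x ∉ U, e x = x) {x : α} (hx : x ∈ U) : e x ∈ U := by
  by_contra h
  exact h (by rwa [e.injective (he _ h)])

theorem inv_apply_eq_of_forall_notMem (he : ∀ x ∉ U, e x = x) {x : α} (hx : x ∉ U) :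
    e⁻¹ x = x := by
  rw [inv_eq_iff_eq, he x hx]

open Classical in
noncomputable def swindleFun (φ e : Perm α) (U : Set α) (x : α) : α :=
  if h : ∃ k : ℕ, (φ ^ k)⁻¹ x ∈ U then (φ ^ h.choose) (e ((φ ^ h.choose)⁻¹ x)) else x

theorem swindleFun_of_mem (hU : IsWandering φ U) {x : α} {k : ℕ} (hk : (φ ^ k)⁻¹ x ∈ U) :
    swindleFun φ e U x = (φ ^ k) (e ((φ ^ k)⁻¹ x)) := by
  have h : ∃ k : ℕ, (φ ^ k)⁻¹ x ∈ U := ⟨k, hk⟩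
  rw [swindleFun, dif_pos h, hU.eq_of_inv_pow_mem h.choose_spec hk]

theorem swindleFun_of_forall_notMem {x : α} (hx : ∀ k : ℕ, (φ ^ k)⁻¹ x ∉ U) :
    swindleFun φ e U x = x := by
  rw [swindleFun, dif_neg (not_exists.2 hx)]

theorem swindleFun_inv_swindleFun (hU : IsWandering φ U) (he : ∀ x ∉ U, e x = x) (x : α) :
    swindleFun φ e⁻¹ U (swindleFun φ e U x) = x := by
  by_cases hx : ∃ k : ℕ, (φ ^ k)⁻¹ x ∈ U
  · obtain ⟨k, hk⟩ := hx
    have hek : (φ ^ k)⁻¹ (swindleFun φ e U x) ∈ U := by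
      rw [swindleFun_of_mem hU hk, coe_inv, symm_apply_apply]
      exact apply_mem_of_forall_notMem he hk
    rw [swindleFun_of_mem hU hek, swindleFun_of_mem hU hk]
    simp only [coe_inv, symm_apply_apply, apply_symm_apply]
  · rw [swindleFun_of_forall_notMem (not_exists.1 hx),
      swindleFun_of_forall_notMem (not_exists.1 hx)]

/-- The infinite product `∏ₖ φ ^ k * e * (φ ^ k)⁻¹` of conjugates of `e` with disjoint supports. -/
noncomputable def swindle (φ e : Perm α) (U : Set α) (hU : IsWandering φ U)
    (he : ∀ x ∉ U, e x = x) : Perm α where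
  toFun := swindleFun φ e U
  invFun := swindleFun φ e⁻¹ U
  left_inv := swindleFun_inv_swindleFun hU he
  right_inv x := by
    simpa using swindleFun_inv_swindleFun hU (fun x hx => inv_apply_eq_of_forall_notMem he hx) x

theorem swindle_mul_self (hU : IsWandering φ U) (he : ∀ x ∉ U, e x = x) :
    swindle φ e U hU he * φ = e * φ * swindle φ e U hU he := by
  refine Equiv.ext fun w => ?_
  change swindleFun φ e U (φ w) = e (φ (swindleFun φ e U w))
  have hsucc : ∀ k : ℕ, (φ ^ (k + 1))⁻¹ (φ w) = (φ ^ k)⁻¹ w := fun k => by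
    rw [← Perm.mul_apply, show (φ ^ (k + 1))⁻¹ * φ = (φ ^ k)⁻¹ by group]
  by_cases hw : ∃ k : ℕ, (φ ^ k)⁻¹ w ∈ U
  · obtain ⟨k, hk⟩ := hw
    have hout : (φ ^ (k + 1)) (e ((φ ^ k)⁻¹ w)) ∉ U :=
      hU _ k.succ_pos _ (apply_mem_of_forall_notMem he hk)
    rw [swindleFun_of_mem hU ((hsucc k).symm ▸ hk), hsucc, swindleFun_of_mem hU hk,
      ← Perm.mul_apply φ, ← pow_succ', he _ hout]
  · rw [not_exists] at hw
    rw [swindleFun_of_forall_notMem hw]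
    by_cases h0 : φ w ∈ U
    · simpa using swindleFun_of_mem (e := e) (k := 0) hU (by simpa using h0)
    · refine (swindleFun_of_forall_notMem fun k hk => ?_).trans (he _ h0).symm
      cases k with
      | zero => exact h0 (by simpa using hk)
      | succ k => exact hw k (hsucc k ▸ hk)

theorem swindle_mul_mul_inv_mul_inv (hU : IsWandering φ U) (he : ∀ x ∉ U, e x = x) :
    swindle φ e U hU he * φ * (swindle φ e U hU he)⁻¹ * φ⁻¹ = e := by
  rw [swindle_mul_self]
  group

end Equiv.Perm

namespace HalfPlane

def dilate (t : ℝ) (q : HalfPlane) : HalfPlane :=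
  ⟨|t| • q.1, by simpa using mul_nonneg (abs_nonneg t) q.2⟩

@[simp] theorem coe_dilate (t : ℝ) (q : HalfPlane) : (dilate t q).1 = |t| • q.1 := rfl

theorem norm_dilate (t : ℝ) (q : HalfPlane) : ‖(dilate t q).1‖ = |t| * ‖q.1‖ := by
  simp [norm_smul]

theorem dist_dilate (t : ℝ) (p q : HalfPlane) :
    dist (dilate t p) (dilate t q) = |t| * dist p q := by
  simp [Subtype.dist_eq, dist_smul₀]

theorem dilate_dilate (s t : ℝ) (q : HalfPlane) : dilate s (dilate t q) = dilate (s * t) q :=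
  Subtype.ext <| by simp [smul_smul, abs_mul]

@[simp] theorem dilate_one (q : HalfPlane) : dilate 1 q = q := Subtype.ext <| by simp

theorem dilate_inv_dilate {t : ℝ} (ht : t ≠ 0) (q : HalfPlane) : dilate t⁻¹ (dilate t q) = q := by
  rw [dilate_dilate, inv_mul_cancel₀ ht, dilate_one]

theorem dilate_dilate_inv {t : ℝ} (ht : t ≠ 0) (q : HalfPlane) : dilate t (dilate t⁻¹ q) = q := by
  rw [dilate_dilate, mul_inv_cancel₀ ht, dilate_one]

theorem continuous_dilate : Continuous fun p : ℝ × HalfPlane => dilate p.1 p.2 := by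
  unfold dilate; fun_prop

theorem continuous_dilate_const (t : ℝ) : Continuous (dilate t) := by
  unfold dilate; fun_prop

noncomputable def dilation (t : ℝ) (ht : t ≠ 0) : Perm HalfPlane where
  toFun := dilate t
  invFun := dilate t⁻¹
  left_inv := dilate_inv_dilate ht
  right_inv := dilate_dilate_inv ht

theorem isHomeo_dilation {t : ℝ} (ht : t ≠ 0) : IsHomeo (dilation t ht) :=
  ⟨continuous_dilate_const t, continuous_dilate_const t⁻¹⟩

theorem isCompact_norm_le (R : ℝ) : IsCompact {q : HalfPlane | ‖q.1‖ ≤ R} := by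
  have hc : IsClosed {p : ℝ × ℝ | 0 ≤ p.2} := isClosed_le continuous_const continuous_snd
  simpa [Set.preimage, mem_closedBall_zero_iff] using
    hc.isClosedEmbedding_subtypeVal.isCompact_preimage (isCompact_closedBall (0 : ℝ × ℝ) R)

theorem compactSupp_of_norm_gt {e : Perm HalfPlane} (R : ℝ) (he : ∀ q, R < ‖q.1‖ → e q = q) :
    CompactSupp e :=
  ⟨_, isCompact_norm_le R, fun q hq => he q (not_le.1 hq)⟩

end HalfPlane

theorem isHomeo_one : IsHomeo 1 := ⟨continuous_id, continuous_id⟩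

theorem IsHomeo.mul {a b : Equiv.Perm HalfPlane} (ha : IsHomeo a) (hb : IsHomeo b) :
    IsHomeo (a * b) :=
  ⟨ha.1.comp hb.1, hb.2.comp ha.2⟩

theorem IsHomeo.inv {a : Equiv.Perm HalfPlane} (ha : IsHomeo a) : IsHomeo a⁻¹ :=
  ⟨ha.2, ha.1⟩

theorem CompactSupp.conj {L e : Equiv.Perm HalfPlane} (hL : Continuous L) (he : CompactSupp e) :
    CompactSupp (L * e * L⁻¹) := by
  obtain ⟨K, hK, hfix⟩ := he
  refine ⟨L '' K, hK.image hL, fun x hx => ?_⟩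
  have hx' : L⁻¹ x ∉ K := fun h => hx ⟨_, h, by simp⟩
  rw [Perm.mul_apply, Perm.mul_apply, hfix _ hx', Perm.coe_inv, Equiv.apply_symm_apply]


theorem exists_forall_dist_apply_le {X : Type*} [PseudoMetricSpace X] {f : X → X}
    (hf : Continuous f) {K : Set X} (hK : IsCompact K) (hfix : ∀ x ∉ K, f x = x) :
    ∃ C, ∀ x, dist (f x) x ≤ C := by
  obtain ⟨C, hC⟩ := (hK.image (hf.dist continuous_id)).bddAbove
  refine ⟨max C 0, fun x => ?_⟩
  by_cases hx : x ∈ K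
  · exact (hC ⟨x, hx, rfl⟩).trans (le_max_left _ _)
  · simp [hfix x hx]

namespace HalfPlane

/-- Alexander's trick: conjugating `e` by the dilation by `t` shrinks its support towards the
boundary point `0` as `t → 0`. -/
noncomputable def alexanderIsotopy (e : Perm HalfPlane) (t : ℝ) : Perm HalfPlane :=
  if ht : t = 0 then 1 else dilation t ht * e * (dilation t ht)⁻¹

theorem alexanderIsotopy_apply (e : Perm HalfPlane) {t : ℝ} (ht : t ≠ 0) (q : HalfPlane) :
    alexanderIsotopy e t q = dilate t (e (dilate t⁻¹ q)) := by
  rw [alexanderIsotopy, dif_neg ht]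
  rfl

theorem dist_alexanderIsotopy_le {e : Perm HalfPlane} {C : ℝ} (hC : ∀ q, dist (e q) q ≤ C)
    (t : ℝ) (q : HalfPlane) : dist (alexanderIsotopy e t q) q ≤ |t| * C := by
  by_cases ht : t = 0
  · simp [alexanderIsotopy, ht]
  · have h := dist_dilate t (e (dilate t⁻¹ q)) (dilate t⁻¹ q)
    rw [dilate_dilate_inv ht] at h
    rw [alexanderIsotopy_apply e ht, h]
    exact mul_le_mul_of_nonneg_left (hC _) (abs_nonneg t)

theorem continuous_alexanderIsotopy {e : Perm HalfPlane} (hc : Continuous e)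
    (hs : CompactSupp e) : Continuous fun p : ℝ × HalfPlane => alexanderIsotopy e p.1 p.2 := by
  obtain ⟨K, hK, hfix⟩ := hs
  obtain ⟨C, hC⟩ := exists_forall_dist_apply_le hc hK hfix
  refine continuous_iff_continuousAt.2 fun ⟨t₀, q₀⟩ => ?_
  by_cases ht₀ : t₀ = 0
  · subst ht₀
    have h0 : alexanderIsotopy e 0 q₀ = q₀ := by simp [alexanderIsotopy]
    rw [ContinuousAt, h0, tendsto_iff_dist_tendsto_zero]
    refine squeeze_zero (fun _ => dist_nonneg) (fun p => (dist_triangle _ p.2 q₀).trans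
      (add_le_add (dist_alexanderIsotopy_le hC p.1 p.2) le_rfl)) ?_
    have : Continuous fun p : ℝ × HalfPlane => |p.1| * C + dist p.2 q₀ := by fun_prop
    simpa using this.tendsto (0, q₀)
  · have hG : ContinuousAt (fun p : ℝ × HalfPlane => dilate p.1 (e (dilate p.1⁻¹ p.2)))
        (t₀, q₀) :=
      continuous_dilate.continuousAt.comp (continuousAt_fst.prodMk (hc.continuousAt.comp
        (continuous_dilate.continuousAt.comp ((continuousAt_fst.inv₀ ht₀).prodMk
          continuousAt_snd))))
    refine hG.congr ?_
    filter_upwards [continuousAt_fst.eventually_ne ht₀] with p hp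
    exact (alexanderIsotopy_apply e hp p.2).symm

theorem isHomeo_alexanderIsotopy {e : Perm HalfPlane} (he : IsHomeo e) (t : ℝ) :
    IsHomeo (alexanderIsotopy e t) := by
  by_cases ht : t = 0
  · simpa [alexanderIsotopy, ht] using isHomeo_one
  · simpa [alexanderIsotopy, ht] using
      ((isHomeo_dilation ht).mul he).mul (isHomeo_dilation ht).inv

theorem compactSupp_alexanderIsotopy {e : Perm HalfPlane} (he : CompactSupp e) (t : ℝ) :
    CompactSupp (alexanderIsotopy e t) := by
  by_cases ht : t = 0
  · simpa [alexanderIsotopy, ht] using ⟨∅, isCompact_empty, fun _ _ => rfl⟩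
  · simpa [alexanderIsotopy, ht] using he.conj (isHomeo_dilation ht).1

theorem isotopicToId_of_isHomeo_of_compactSupp {e : Perm HalfPlane} (h₁ : IsHomeo e)
    (h₂ : CompactSupp e) : IsotopicToId e := by
  refine ⟨fun t => alexanderIsotopy e t,
    fun t => ⟨isHomeo_alexanderIsotopy h₁ t, compactSupp_alexanderIsotopy h₂ t⟩,
    (continuous_alexanderIsotopy h₁.1 h₂).comp (continuous_subtype_val.prodMap continuous_id),
    by simp [alexanderIsotopy], Equiv.ext fun q => ?_⟩
  simp [alexanderIsotopy_apply e one_ne_zero]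

theorem inHomeoZero_of_isHomeo_of_compactSupp {e : Perm HalfPlane} (h₁ : IsHomeo e)
    (h₂ : CompactSupp e) : InHomeoZero e :=
  ⟨h₁, h₂, isotopicToId_of_isHomeo_of_compactSupp h₁ h₂⟩

end HalfPlane

/-- The radial profile of the squeeze: `r / 2` on `[0, 4]`, `3 r - 10` on `[4, 5]`, `r` beyond. -/
noncomputable def squeezeProfile (r : ℝ) : ℝ := min r (max (r / 2) (3 * r - 10))

noncomputable def squeezeProfileInv (s : ℝ) : ℝ := max s (min (2 * s) ((s + 10) / 3))

theorem squeezeProfileInv_squeezeProfile (r : ℝ) : squeezeProfileInv (squeezeProfile r) = r := by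
  simp only [squeezeProfile, squeezeProfileInv, min_def, max_def]
  split_ifs <;> linarith

theorem squeezeProfile_squeezeProfileInv (s : ℝ) : squeezeProfile (squeezeProfileInv s) = s := by
  simp only [squeezeProfile, squeezeProfileInv, min_def, max_def]
  split_ifs <;> linarith

theorem squeezeProfile_nonneg {r : ℝ} (hr : 0 ≤ r) : 0 ≤ squeezeProfile r := by
  simp only [squeezeProfile, min_def, max_def]
  split_ifs <;> linarith

theorem squeezeProfileInv_nonneg {s : ℝ} (hs : 0 ≤ s) : 0 ≤ squeezeProfileInv s := by
  simp only [squeezeProfileInv, min_def, max_def]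
  split_ifs <;> linarith

theorem squeezeProfile_of_le {r : ℝ} (hr : 0 ≤ r) (h : r ≤ 4) : squeezeProfile r = 2⁻¹ * r := by
  simp only [squeezeProfile, min_def, max_def]
  split_ifs <;> linarith

theorem squeezeProfile_of_ge {r : ℝ} (h : 5 ≤ r) : squeezeProfile r = r := by
  simp only [squeezeProfile, min_def, max_def]
  split_ifs <;> linarith

theorem continuous_squeezeProfile : Continuous squeezeProfile := by
  unfold squeezeProfile; fun_prop

theorem continuous_squeezeProfileInv : Continuous squeezeProfileInv := by
  unfold squeezeProfileInv; fun_prop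

namespace HalfPlane

/-- At `q = 0` the junk value of the division is harmless: every dilation fixes `0`. -/
noncomputable def radialMap (ρ : ℝ → ℝ) (q : HalfPlane) : HalfPlane :=
  dilate (ρ ‖q.1‖ / ‖q.1‖) q

variable {ρ τ : ℝ → ℝ}

theorem radialMap_eq_dilate {q : HalfPlane} {c : ℝ} (h : ρ ‖q.1‖ = c * ‖q.1‖) :
    radialMap ρ q = dilate c q := by
  by_cases hq : q.1 = 0
  · exact Subtype.ext (by simp [radialMap, hq])
  · rw [radialMap, h, mul_div_cancel_right₀ c (norm_ne_zero_iff.2 hq)]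

theorem norm_radialMap (hρ : ∀ r, 0 ≤ r → 0 ≤ ρ r) (hρ₀ : ρ 0 = 0) (q : HalfPlane) :
    ‖(radialMap ρ q).1‖ = ρ ‖q.1‖ := by
  rw [radialMap, norm_dilate, abs_div, abs_norm]
  by_cases hq : ‖q.1‖ = 0
  · simp [hq, hρ₀]
  · rw [div_mul_cancel₀ _ hq, abs_of_nonneg (hρ _ (norm_nonneg _))]

theorem radialMap_radialMap (hρ₀ : ρ 0 = 0) (hτ : ∀ r, 0 ≤ r → 0 ≤ τ r) (hτ₀ : τ 0 = 0)
    (hρτ : ∀ r, ρ (τ r) = r) (q : HalfPlane) : radialMap ρ (radialMap τ q) = q := by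
  by_cases hq : q.1 = 0
  · exact Subtype.ext (by simp [radialMap, hq])
  have hr : ‖q.1‖ ≠ 0 := norm_ne_zero_iff.2 hq
  have hs : τ ‖q.1‖ ≠ 0 := fun h => hr (by rw [← hρτ ‖q.1‖, h, hρ₀])
  rw [radialMap, norm_radialMap hτ hτ₀, hρτ, radialMap, dilate_dilate, div_mul_div_cancel₀ hs,
    div_self hr, dilate_one]

theorem continuous_radialMap (hρ : Continuous ρ) (hρ₀ : ρ 0 = 0) (hρnn : ∀ r, 0 ≤ r → 0 ≤ ρ r) :
    Continuous (radialMap ρ) := by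
  have hc : Continuous fun q : HalfPlane => ρ ‖q.1‖ := hρ.comp continuous_subtype_val.norm
  refine continuous_iff_continuousAt.2 fun q₀ => ?_
  by_cases hq₀ : q₀.1 = 0
  · have hfix : radialMap ρ q₀ = q₀ := Subtype.ext (by simp [radialMap, hq₀])
    have hdist : ∀ q, dist (radialMap ρ q) q₀ = ρ ‖q.1‖ := fun q => by
      rw [Subtype.dist_eq, hq₀, dist_zero_right, norm_radialMap hρnn hρ₀]
    rw [ContinuousAt, hfix, tendsto_iff_dist_tendsto_zero]
    simp_rw [hdist]
    simpa [hq₀, hρ₀] using hc.tendsto q₀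
  · have hscale : ContinuousAt (fun q : HalfPlane => ρ ‖q.1‖ / ‖q.1‖) q₀ :=
      hc.continuousAt.div
        continuous_subtype_val.norm.continuousAt (norm_ne_zero_iff.2 hq₀)
    exact continuous_dilate.continuousAt.comp (hscale.prodMk continuousAt_id)

theorem squeezeProfile_zero : squeezeProfile 0 = 0 := by norm_num [squeezeProfile]

theorem squeezeProfileInv_zero : squeezeProfileInv 0 = 0 := by norm_num [squeezeProfileInv]

noncomputable def squeeze : Perm HalfPlane where
  toFun := radialMap squeezeProfile
  invFun := radialMap squeezeProfileInv
  left_inv := radialMap_radialMap squeezeProfileInv_zero (fun _ => squeezeProfile_nonneg)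
    squeezeProfile_zero squeezeProfileInv_squeezeProfile
  right_inv := radialMap_radialMap squeezeProfile_zero (fun _ => squeezeProfileInv_nonneg)
    squeezeProfileInv_zero squeezeProfile_squeezeProfileInv

theorem squeeze_apply_of_norm_le {q : HalfPlane} (h : ‖q.1‖ ≤ 4) : squeeze q = dilate 2⁻¹ q :=
  radialMap_eq_dilate (squeezeProfile_of_le (norm_nonneg _) h)

theorem squeeze_apply_of_norm_ge {q : HalfPlane} (h : 5 ≤ ‖q.1‖) : squeeze q = q :=
  (radialMap_eq_dilate (by rw [squeezeProfile_of_ge h, one_mul])).trans (dilate_one q)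

theorem isHomeo_squeeze : IsHomeo squeeze :=
  ⟨continuous_radialMap continuous_squeezeProfile squeezeProfile_zero
      fun _ => squeezeProfile_nonneg,
    continuous_radialMap continuous_squeezeProfileInv squeezeProfileInv_zero
      fun _ => squeezeProfileInv_nonneg⟩

theorem compactSupp_squeeze : CompactSupp squeeze :=
  compactSupp_of_norm_gt 5 fun _ hq => squeeze_apply_of_norm_ge hq.le

theorem squeeze_pow_apply_of_norm_le (n : ℕ) {q : HalfPlane} (h : ‖q.1‖ ≤ 4) :
    (squeeze ^ n) q = dilate (2 ^ n)⁻¹ q := by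
  induction n generalizing q with
  | zero => simp
  | succ n ih =>
    have h' : ‖(dilate 2⁻¹ q).1‖ ≤ 4 := by rw [norm_dilate]; norm_num; linarith [norm_nonneg q.1]
    rw [pow_succ, Perm.mul_apply, squeeze_apply_of_norm_le h, ih h', dilate_dilate, pow_succ,
      mul_inv]

end HalfPlane

theorem exists_two_pow_mul_mem_Ioo {r : ℝ} (hr : 0 < r) (h : r ≤ 4) :
    ∃ k : ℕ, 2 ^ k * r ∈ Set.Ioo (2 : ℝ) 5 := by
  obtain ⟨k, hk₁, hk₂⟩ := exists_nat_pow_near ((one_le_div hr).2 h) one_lt_two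
  rw [le_div_iff₀ hr] at hk₁
  rw [div_lt_iff₀ hr, pow_succ] at hk₂
  exact ⟨k, by linarith, by linarith⟩

theorem eq_of_two_pow_mul_mem {r : ℝ} {j k : ℕ} (hj : 2 ^ j * r ∈ Set.Icc (3 : ℝ) 4)
    (hk : 2 ^ k * r ∈ Set.Ioo (2 : ℝ) 5) : j = k := by
  have hr : 0 < r :=
    pos_of_mul_pos_right (by linarith [hj.1] : (0 : ℝ) < 2 ^ j * r) (by positivity)
  have double : ∀ {a b : ℕ}, a < b → 2 * (2 ^ a * r) ≤ 2 ^ b * r := fun {a b} hab => by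
    have := pow_le_pow_right₀ (one_le_two : (1 : ℝ) ≤ 2) hab
    rw [pow_succ] at this
    nlinarith
  rcases lt_trichotomy j k with h | h | h
  · linarith [double h, hj.1, hk.2]
  · exact h
  · linarith [double h, hj.2, hk.1]

namespace HalfPlane

def annulus : Set HalfPlane := {q | ‖q.1‖ ∈ Set.Icc 3 4}

theorem dilate_two_pow_mem_annulus_iff {k : ℕ} {q : HalfPlane} :
    dilate (2 ^ k) q ∈ annulus ↔ 2 ^ k * ‖q.1‖ ∈ Set.Icc (3 : ℝ) 4 := by
  change ‖(dilate (2 ^ k) q).1‖ ∈ Set.Icc (3 : ℝ) 4 ↔ _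
  rw [norm_dilate, abs_pow, abs_two]

theorem isWandering_squeeze_annulus : squeeze.IsWandering annulus := by
  intro n hn q hq hmem
  have h2 : (2 : ℝ) ≤ 2 ^ n := le_self_pow₀ one_le_two hn.ne'
  have h3 := hmem.1
  rw [squeeze_pow_apply_of_norm_le n hq.2, norm_dilate, abs_inv, abs_pow, abs_two,
    le_inv_mul_iff₀ (by positivity)] at h3
  linarith [hq.2]

theorem inv_squeeze_pow_apply {k : ℕ} {q : HalfPlane} (h : dilate (2 ^ k) q ∈ annulus) :
    (squeeze ^ k)⁻¹ q = dilate (2 ^ k) q := by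
  rw [Perm.inv_eq_iff_eq, squeeze_pow_apply_of_norm_le k h.2, dilate_inv_dilate (by positivity)]

theorem inv_squeeze_pow_mem_annulus_iff {k : ℕ} {q : HalfPlane} :
    (squeeze ^ k)⁻¹ q ∈ annulus ↔ dilate (2 ^ k) q ∈ annulus := by
  refine ⟨fun h => ?_, fun h => inv_squeeze_pow_apply h ▸ h⟩
  have hq : (squeeze ^ k) ((squeeze ^ k)⁻¹ q) = q := by simp
  rw [squeeze_pow_apply_of_norm_le k h.2] at hq
  rwa [← hq, dilate_dilate_inv (by positivity)]

variable {e : Perm HalfPlane}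

theorem swindleFun_squeeze_of_mem (he : ∀ q ∉ annulus, e q = q) {k : ℕ} {q : HalfPlane}
    (hk : dilate (2 ^ k) q ∈ annulus) :
    squeeze.swindleFun e annulus q = dilate (2 ^ k)⁻¹ (e (dilate (2 ^ k) q)) := by
  rw [Perm.swindleFun_of_mem isWandering_squeeze_annulus (inv_squeeze_pow_mem_annulus_iff.2 hk),
    inv_squeeze_pow_apply hk,
    squeeze_pow_apply_of_norm_le k (Perm.apply_mem_of_forall_notMem he hk).2]

theorem swindleFun_squeeze_of_forall_notMem {q : HalfPlane}
    (h : ∀ k : ℕ, dilate (2 ^ k) q ∉ annulus) : squeeze.swindleFun e annulus q = q :=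
  Perm.swindleFun_of_forall_notMem fun k hk => h k (inv_squeeze_pow_mem_annulus_iff.1 hk)

theorem swindleFun_squeeze_of_mem_Ioo (he : ∀ q ∉ annulus, e q = q) {k : ℕ} {q : HalfPlane}
    (hk : 2 ^ k * ‖q.1‖ ∈ Set.Ioo (2 : ℝ) 5) :
    squeeze.swindleFun e annulus q = dilate (2 ^ k)⁻¹ (e (dilate (2 ^ k) q)) := by
  by_cases hq : dilate (2 ^ k) q ∈ annulus
  · exact swindleFun_squeeze_of_mem he hq
  · rw [he _ hq, dilate_inv_dilate (by positivity)]
    refine swindleFun_squeeze_of_forall_notMem fun j hj => hq ?_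
    rwa [← eq_of_two_pow_mul_mem (dilate_two_pow_mem_annulus_iff.1 hj) hk]

theorem swindleFun_squeeze_of_norm_gt {q : HalfPlane} (h : 4 < ‖q.1‖) :
    squeeze.swindleFun e annulus q = q :=
  swindleFun_squeeze_of_forall_notMem fun k hk => by
    have h1 : (1 : ℝ) ≤ 2 ^ k := one_le_pow₀ one_le_two
    nlinarith [(dilate_two_pow_mem_annulus_iff.1 hk).2]

theorem norm_swindleFun_squeeze_le (he : ∀ q ∉ annulus, e q = q) (q : HalfPlane) :
    ‖(squeeze.swindleFun e annulus q).1‖ ≤ 2 * ‖q.1‖ := by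
  by_cases h : ∃ k : ℕ, dilate (2 ^ k) q ∈ annulus
  · obtain ⟨k, hk⟩ := h
    have he4 := (Perm.apply_mem_of_forall_notMem he hk).2
    have hq3 := (dilate_two_pow_mem_annulus_iff.1 hk).1
    rw [swindleFun_squeeze_of_mem he hk, norm_dilate, abs_inv, abs_pow, abs_two,
      inv_mul_le_iff₀ (by positivity)]
    linarith
  · rw [swindleFun_squeeze_of_forall_notMem (not_exists.1 h)]
    linarith [norm_nonneg q.1]

theorem continuous_swindleFun_squeeze (he : ∀ q ∉ annulus, e q = q) (hc : Continuous e) :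
    Continuous (squeeze.swindleFun e annulus) := by
  have hnorm : Continuous fun q : HalfPlane => ‖q.1‖ := continuous_subtype_val.norm
  refine continuous_iff_continuousAt.2 fun q₀ => ?_
  by_cases hq₀ : q₀.1 = 0
  · have hfix : squeeze.swindleFun e annulus q₀ = q₀ :=
      swindleFun_squeeze_of_forall_notMem fun k hk => by
        have h3 := (dilate_two_pow_mem_annulus_iff.1 hk).1
        norm_num [hq₀] at h3
    have hdist : ∀ q, dist (squeeze.swindleFun e annulus q) q₀ ≤ 2 * dist q q₀ := fun q => by
      simpa [Subtype.dist_eq, hq₀] using norm_swindleFun_squeeze_le he q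
    rw [ContinuousAt, hfix, tendsto_iff_dist_tendsto_zero]
    refine squeeze_zero (fun _ => dist_nonneg) hdist ?_
    have hbound : Continuous fun q : HalfPlane => 2 * dist q q₀ := by fun_prop
    simpa using hbound.tendsto q₀
  rcases le_or_gt ‖q₀.1‖ 4 with h4 | h4
  · obtain ⟨k, hk⟩ := exists_two_pow_mul_mem_Ioo (norm_pos_iff.2 hq₀) h4
    have hG : Continuous fun q => dilate (2 ^ k)⁻¹ (e (dilate (2 ^ k) q)) :=
      (continuous_dilate_const _).comp (hc.comp (continuous_dilate_const _))
    refine hG.continuousAt.congr ?_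
    filter_upwards [(isOpen_Ioo.preimage (hnorm.const_mul _)).mem_nhds hk] with q hq
    exact (swindleFun_squeeze_of_mem_Ioo he hq).symm
  · refine continuousAt_id.congr ?_
    filter_upwards [(isOpen_lt continuous_const hnorm).mem_nhds h4] with q hq
    exact (swindleFun_squeeze_of_norm_gt hq).symm

theorem isHomeo_swindle_squeeze (he : ∀ q ∉ annulus, e q = q) (hH : IsHomeo e) :
    IsHomeo (squeeze.swindle e annulus isWandering_squeeze_annulus he) :=
  ⟨continuous_swindleFun_squeeze he hH.1,
    continuous_swindleFun_squeeze (fun _ hq => Perm.inv_apply_eq_of_forall_notMem he hq) hH.2⟩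

theorem compactSupp_swindle_squeeze (he : ∀ q ∉ annulus, e q = q) :
    CompactSupp (squeeze.swindle e annulus isWandering_squeeze_annulus he) :=
  compactSupp_of_norm_gt 4 fun _ hq => swindleFun_squeeze_of_norm_gt hq

def shift (c : ℝ) : Perm HalfPlane where
  toFun q := ⟨(q.1.1 + c, q.1.2), q.2⟩
  invFun q := ⟨(q.1.1 - c, q.1.2), q.2⟩
  left_inv q := by simp
  right_inv q := by simp

theorem isHomeo_shift (c : ℝ) : IsHomeo (shift c) :=
  ⟨(by fun_prop : Continuous fun q : HalfPlane => (q.1.1 + c, q.1.2)).subtype_mk _,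
    (by fun_prop : Continuous fun q : HalfPlane => (q.1.1 - c, q.1.2)).subtype_mk _⟩

/-- The affine map `q ↦ 2 M q + (7 M, 0)` pulls the ball `‖p‖ ≤ M` back into
`[-4, -3] × [0, 1 / 2]`. -/
theorem mem_annulus_of_norm_shift_dilate_le {M : ℝ} (hM : 0 < M) {q : HalfPlane}
    (h : ‖(shift (7 * M) (dilate (2 * M) q)).1‖ ≤ M) : q ∈ annulus := by
  have h' : |2 * M * q.1.1 + 7 * M| ≤ M ∧ |2 * M * q.1.2| ≤ M := by
    simpa [shift, Prod.norm_def, abs_of_pos hM, abs_mul] using h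
  rw [abs_le, abs_le] at h'
  obtain ⟨⟨hx₁, hx₂⟩, -, hy⟩ := h'
  have hx₃ : -4 ≤ q.1.1 := by nlinarith
  have hx₄ : q.1.1 ≤ -3 := by nlinarith
  have hy' : q.1.2 ≤ -q.1.1 := by nlinarith
  have hq : ‖q.1‖ = -q.1.1 := by
    rw [Prod.norm_def, Real.norm_eq_abs, Real.norm_eq_abs, abs_of_nonpos (by linarith),
      abs_of_nonneg q.2, max_eq_left hy']
  change 3 ≤ ‖q.1‖ ∧ ‖q.1‖ ≤ 4
  rw [hq]
  constructor <;> linarith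

theorem exists_isHomeo_conj_eq_self_of_notMem_annulus {h : Perm HalfPlane}
    (hS : CompactSupp h) :
    ∃ L : Perm HalfPlane, IsHomeo L ∧ ∀ q ∉ annulus, (L⁻¹ * h * L) q = q := by
  obtain ⟨K, hK, hfix⟩ := hS
  obtain ⟨C, hC⟩ := hK.exists_bound_of_continuousOn continuous_subtype_val.continuousOn
  have hM : 0 < max C 1 := lt_max_of_lt_right one_pos
  set L := shift (7 * max C 1) * dilation (2 * max C 1) (by positivity)
  refine ⟨L, (isHomeo_shift _).mul (isHomeo_dilation _), fun q hq => ?_⟩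
  have hLq : L q ∉ K := fun hK' =>
    hq (mem_annulus_of_norm_shift_dilate_le hM ((hC _ hK').trans (le_max_left _ _)))
  simp [hfix _ hLq]

theorem inHomeoZero_conj {L e : Perm HalfPlane} (hL : IsHomeo L) (he : IsHomeo e)
    (hs : CompactSupp e) : InHomeoZero (L * e * L⁻¹) :=
  inHomeoZero_of_isHomeo_of_compactSupp ((hL.mul he).mul hL.inv) (hs.conj hL.1)

end HalfPlane

open HalfPlane

theorem half_plane_homeo_is_single_commutator
    (h : Equiv.Perm HalfPlane) (hh : InHomeoZero h) :
    ∃ g φ : Equiv.Perm HalfPlane, InHomeoZero g ∧ InHomeoZero φ ∧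
      h = g * φ * g⁻¹ * φ⁻¹ := by
  obtain ⟨hH, hS, -⟩ := hh
  obtain ⟨L, hL, he⟩ := exists_isHomeo_conj_eq_self_of_notMem_annulus hS
  set g := squeeze.swindle (L⁻¹ * h * L) annulus isWandering_squeeze_annulus he
  have hg : IsHomeo g := isHomeo_swindle_squeeze he ((hL.inv.mul hH).mul hL)
  refine ⟨L * g * L⁻¹, L * squeeze * L⁻¹, inHomeoZero_conj hL hg (compactSupp_swindle_squeeze he),
    inHomeoZero_conj hL isHomeo_squeeze compactSupp_squeeze, ?_⟩
  have hcomm := Perm.swindle_mul_mul_inv_mul_inv isWandering_squeeze_annulus he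
  calc h = L * (L⁻¹ * h * L) * L⁻¹ := by group
    _ = L * (g * squeeze * g⁻¹ * squeeze⁻¹) * L⁻¹ := by rw [hcomm]
    _ = L * g * L⁻¹ * (L * squeeze * L⁻¹) * (L * g * L⁻¹)⁻¹ * (L * squeeze * L⁻¹)⁻¹ := by group
end
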